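/- Let ρ be a distribution on Σ^r that is shift-stationary at order ≤ n and has full support of its length-(n−1) marginals where needed, and let ρ̃ be its project–lift rollout. Then the Kullback–Leibler divergence admits the exact chain-rule decomposition KL(ρ ‖ ρ̃) = Σ_{t=n+1}^{r} I_ρ(X_t ; X_1^{t−n} | X_{t−n+1}^{t−1}), the sum of the conditional mutual informations (in bits) between the token at position t and the tokens more than n−1 steps in its past, given the intervening n−1 tokens, where (X_1,…,X_r) ∼ ρ. -/

import Mathlib

/-!
Project–lift diagnostics.

Fix a finite alphabet `σ` with `s = |σ| ≥ 2` and integers `r > n ≥ 1`; we write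
`n = m + 1` (contexts have length `m = n − 1`) and `r = m + 1 + L` (`L = r − n` is the
hidden extra depth; for `r = n` take `L = 0`).  A distribution `ρ` on `Σ^r` is
shift-stationary at order `≤ n` if all its contiguous length-`n` marginals coincide.
`ngramMarg ρ` is its length-`n` marginal (at offset `0`), `ctxMarg ρ` the induced
length-`(n−1)` marginal, `plContLaw ρ a c = ρ_n(c·a)/ρ_{n−1}(c)` the induced order-`n`
continuation law, and `rollout ρ` the project–lift rollout
`ρ̃(x_1⋯x_r) = ρ_n(x_1⋯x_n) · ∏_{t=n+1}^r p(x_t | x_{t−n+1}⋯x_{t−1})`.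
KL divergences are in bits.
-/

open Finset

variable {σ : Type*}

/-- The length-`len` window at offset `t` of a string of length `r = m + 1 + L`. -/
def win (m L len t : ℕ) (h : t + len ≤ m + 1 + L)
    (x : Fin (m + 1 + L) → σ) : Fin len → σ :=
  fun i => x ⟨t + i.val, by have := i.isLt; omega⟩

/-- The contiguous length-`len` marginal at offset `t` of a distribution on `Σ^r`. -/
noncomputable def marg [Fintype σ] [DecidableEq σ] (m L len t : ℕ)
    (h : t + len ≤ m + 1 + L) (ρ : (Fin (m + 1 + L) → σ) → ℝ)
    (u : Fin len → σ) : ℝ :=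
  ∑ x : Fin (m + 1 + L) → σ, if win m L len t h x = u then ρ x else 0

/-- A distribution on sequences: nonnegative and summing to `1`. -/
def IsDistOn [Fintype σ] [DecidableEq σ] {ι : Type*} [Fintype ι] [DecidableEq ι]
    (ρ : (ι → σ) → ℝ) : Prop :=
  (∀ x, 0 ≤ ρ x) ∧ ∑ x, ρ x = 1

/-- Shift-stationarity at order `≤ n` (`n = m+1`): all contiguous length-`n`
marginals coincide. -/
def ShiftStationary [Fintype σ] [DecidableEq σ] (m L : ℕ)
    (ρ : (Fin (m + 1 + L) → σ) → ℝ) : Prop :=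
  ∀ (t₁ t₂ : ℕ) (h₁ : t₁ + (m + 1) ≤ m + 1 + L) (h₂ : t₂ + (m + 1) ≤ m + 1 + L),
    marg m L (m + 1) t₁ h₁ ρ = marg m L (m + 1) t₂ h₂ ρ

/-- The common length-`n` marginal `ρ_n` (computed at offset `0`). -/
noncomputable def ngramMarg [Fintype σ] [DecidableEq σ] (m L : ℕ)
    (ρ : (Fin (m + 1 + L) → σ) → ℝ) : (Fin (m + 1) → σ) → ℝ :=
  marg m L (m + 1) 0 (by omega) ρ

/-- The induced length-`(n−1)` (context) marginal `ρ_{n−1}`. -/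
noncomputable def ctxMarg [Fintype σ] [DecidableEq σ] (m L : ℕ)
    (ρ : (Fin (m + 1 + L) → σ) → ℝ) (c : Fin m → σ) : ℝ :=
  ∑ a, ngramMarg m L ρ (Fin.snoc c a)

/-- The induced order-`n` continuation law `p(a | c) = ρ_n(c·a)/ρ_{n−1}(c)`. -/
noncomputable def plContLaw [Fintype σ] [DecidableEq σ] (m L : ℕ)
    (ρ : (Fin (m + 1 + L) → σ) → ℝ) (a : σ) (c : Fin m → σ) : ℝ :=
  ngramMarg m L ρ (Fin.snoc c a) / ctxMarg m L ρ c

/-- The project–lift rollout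
`ρ̃(x_1⋯x_r) = ρ_n(x_1⋯x_n) · ∏_{t=n+1}^r p(x_t | x_{t−n+1}⋯x_{t−1})`. -/
noncomputable def rollout [Fintype σ] [DecidableEq σ] (m L : ℕ)
    (ρ : (Fin (m + 1 + L) → σ) → ℝ) : (Fin (m + 1 + L) → σ) → ℝ :=
  fun x =>
    ngramMarg m L ρ (win m L (m + 1) 0 (by omega) x) *
      ∏ t : Fin L,
        plContLaw m L ρ (x ⟨m + 1 + t.val, by have := t.isLt; omega⟩)
          (win m L m (t.val + 1) (by have := t.isLt; omega) x)

/-- Kullback–Leibler divergence in bits (with the convention `0·log 0 = 0`). -/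
noncomputable def klBits {X : Type*} [Fintype X] (μ ν : X → ℝ) : ℝ :=
  ∑ x, μ x * Real.logb 2 (μ x / ν x)

/-- The conditional mutual information (in bits), under `ρ`, between the token
`X_{n+t+1}` and the remote past `X_1^{t+1}`, given the intervening `n − 1` tokens
`X_{t+2}^{n+t}` (`0`-based token index `m+1+t`, `t = 0, …, L−1`), written as the
expected log-ratio
`I(X;Y∣Z) = E_ρ [ log₂ ( p(x,y,z)·p(z) / (p(x,z)·p(y,z)) ) ]` of marginals of `ρ`. -/
noncomputable def condMutualInfo [Fintype σ] [DecidableEq σ] (m L : ℕ)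
    (ρ : (Fin (m + 1 + L) → σ) → ℝ) (t : Fin L) : ℝ :=
  ∑ x : Fin (m + 1 + L) → σ,
    ρ x * Real.logb 2
      ((marg m L (m + 1 + t.val + 1) 0 (by have := t.isLt; omega) ρ
          (win m L (m + 1 + t.val + 1) 0 (by have := t.isLt; omega) x) *
        marg m L m (t.val + 1) (by have := t.isLt; omega) ρ
          (win m L m (t.val + 1) (by have := t.isLt; omega) x)) /
       (marg m L (m + 1 + t.val) 0 (by have := t.isLt; omega) ρ
          (win m L (m + 1 + t.val) 0 (by have := t.isLt; omega) x) *
        marg m L (m + 1) (t.val + 1) (by have := t.isLt; omega) ρ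
          (win m L (m + 1) (t.val + 1) (by have := t.isLt; omega) x)))

/-!
Both sides are `ρ`-expectations, so it suffices to compare the integrands at a string `x` with
`ρ x > 0`. Write `P_k` for the `ρ`-probability of the prefix of `x` of length `n + k`, and `N_t`,
`C_t` for those of its windows of length `n` and `n − 1` at offset `t + 1`; all of them are at least
`ρ x > 0`. By stationarity the rollout is `ρ̃ x = P_0 · ∏ N_t / C_t`, while the `t`-th
mutual-information integrand is `log (P_{t+1} C_t / (P_t N_t))`; summed over `t`, the prefix terms
telescope to `log (P_L / P_0) = log (ρ x / P_0)`.
-/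

theorem Fin.sum_univ_succ_sub_castSucc {M : Type*} [AddCommGroup M] {n : ℕ}
    (f : Fin (n + 1) → M) :
    ∑ i : Fin n, (f i.succ - f i.castSucc) = f (Fin.last n) - f 0 := by
  induction n with
  | zero => simp
  | succ n ih =>
    rw [Fin.sum_univ_castSucc]
    simp only [Fin.succ_castSucc]
    rw [ih (fun i => f i.castSucc)]
    simp only [Fin.succ_last, Fin.castSucc_zero]
    abel

theorem Real.logb_div_mul_prod_div_eq_sum {L : ℕ} (b : ℝ) (P : Fin (L + 1) → ℝ)
    (N C : Fin L → ℝ) (hP : ∀ k, P k ≠ 0) (hN : ∀ t, N t ≠ 0) (hC : ∀ t, C t ≠ 0) :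
    logb b (P (Fin.last L) / (P 0 * ∏ t, N t / C t)) =
      ∑ t, logb b (P t.succ * C t / (P t.castSucc * N t)) := by
  have hNC : ∀ t, N t / C t ≠ 0 := fun t => div_ne_zero (hN t) (hC t)
  have hterm : ∀ t, logb b (P t.succ * C t / (P t.castSucc * N t)) =
      (logb b (P t.succ) - logb b (P t.castSucc)) - logb b (N t / C t) := by
    intro t
    rw [logb_div (mul_ne_zero (hP _) (hC t)) (mul_ne_zero (hP _) (hN t)),
      logb_mul (hP _) (hC t), logb_mul (hP _) (hN t), logb_div (hN t) (hC t)]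
    ring
  rw [logb_div (hP _) (mul_ne_zero (hP 0) (prod_ne_zero_iff.2 fun t _ => hNC t)),
    logb_mul (hP 0) (prod_ne_zero_iff.2 fun t _ => hNC t), logb_prod _ _ fun t _ => hNC t,
    sum_congr rfl fun t _ => hterm t, sum_sub_distrib,
    Fin.sum_univ_succ_sub_castSucc (fun k => logb b (P k))]
  ring

theorem win_succ {m L len t : ℕ} (h : t + (len + 1) ≤ m + 1 + L) (x : Fin (m + 1 + L) → σ) :
    win m L (len + 1) t h x = Fin.snoc (win m L len t (by omega) x) (x ⟨t + len, by omega⟩) := by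
  funext i
  refine Fin.lastCases ?_ (fun _ => ?_) i <;> simp [win]

section Windows

variable [Fintype σ] [DecidableEq σ] {m L : ℕ}

theorem marg_eq_sum_marg_snoc {len t : ℕ} (h : t + (len + 1) ≤ m + 1 + L)
    (ρ : (Fin (m + 1 + L) → σ) → ℝ) (u : Fin len → σ) :
    marg m L len t (by omega) ρ u = ∑ a, marg m L (len + 1) t h ρ (Fin.snoc u a) := by
  simp only [marg, win_succ h, Fin.snoc_inj]
  rw [sum_comm]
  refine sum_congr rfl fun x _ => ?_
  by_cases hx : win m L len t (by omega) x = u <;> simp [hx]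

noncomputable def winMarg (len t : ℕ) (h : t + len ≤ m + 1 + L)
    (ρ : (Fin (m + 1 + L) → σ) → ℝ) (x : Fin (m + 1 + L) → σ) : ℝ :=
  marg m L len t h ρ (win m L len t h x)

theorem winMarg_full (h : 0 + (m + 1 + L) ≤ m + 1 + L) (ρ : (Fin (m + 1 + L) → σ) → ℝ)
    (x : Fin (m + 1 + L) → σ) : winMarg (m + 1 + L) 0 h ρ x = ρ x := by
  have hwin : ∀ y : Fin (m + 1 + L) → σ, win m L (m + 1 + L) 0 h y = y :=
    fun y => funext fun i => by simp [win]
  simp [winMarg, marg, hwin]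

theorem le_winMarg {len t : ℕ} (h : t + len ≤ m + 1 + L) {ρ : (Fin (m + 1 + L) → σ) → ℝ}
    (hρ : ∀ y, 0 ≤ ρ y) (x : Fin (m + 1 + L) → σ) : ρ x ≤ winMarg len t h ρ x := by
  have := single_le_sum (f := fun y => if win m L len t h y = win m L len t h x then ρ y else 0)
    (fun y _ => by split_ifs <;> simp [hρ y]) (mem_univ x)
  simpa [winMarg, marg] using this

end Windows

section Stationary

variable [Fintype σ] [DecidableEq σ] {m L : ℕ} {ρ : (Fin (m + 1 + L) → σ) → ℝ}

theorem ShiftStationary.marg_eq_ngramMarg (hstat : ShiftStationary m L ρ) {t : ℕ}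
    (h : t + (m + 1) ≤ m + 1 + L) : marg m L (m + 1) t h ρ = ngramMarg m L ρ :=
  hstat t 0 h (by omega)

theorem ShiftStationary.marg_eq_ctxMarg (hstat : ShiftStationary m L ρ) {t : ℕ}
    (h : t + (m + 1) ≤ m + 1 + L) : marg m L m t (by omega) ρ = ctxMarg m L ρ := by
  funext c
  rw [marg_eq_sum_marg_snoc h, hstat.marg_eq_ngramMarg h, ctxMarg]

theorem ShiftStationary.rollout_eq (hstat : ShiftStationary m L ρ) (x : Fin (m + 1 + L) → σ) :
    rollout m L ρ x = winMarg (m + 1) 0 (by omega) ρ x *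
      ∏ t : Fin L, winMarg (m + 1) (t + 1) (by omega) ρ x / winMarg m (t + 1) (by omega) ρ x := by
  refine congrArg _ (prod_congr rfl fun t _ => ?_)
  have h : t.val + 1 + (m + 1) ≤ m + 1 + L := by omega
  have hlast : x ⟨m + 1 + t.val, by omega⟩ = x ⟨t.val + 1 + m, by omega⟩ :=
    congrArg x (Fin.ext (by simp only; omega))
  rw [plContLaw, winMarg, winMarg, win_succ h, hstat.marg_eq_ngramMarg h,
    hstat.marg_eq_ctxMarg h, hlast]

end Stationary

theorem kl_eq_sum_condMutualInfo_general [Fintype σ] [DecidableEq σ]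
    (m L : ℕ)
    (ρ : (Fin (m + 1 + L) → σ) → ℝ) (hρ : IsDistOn ρ)
    (hstat : ShiftStationary m L ρ) :
    klBits ρ (rollout m L ρ) = ∑ t : Fin L, condMutualInfo m L ρ t := by
  obtain ⟨hnn, -⟩ := hρ
  simp only [klBits, condMutualInfo]
  rw [sum_comm]
  refine sum_congr rfl fun x _ => ?_
  rw [← mul_sum]
  rcases (hnn x).eq_or_lt with hx | hx
  · simp [← hx]
  have hpos : ∀ len t h, winMarg len t h ρ x ≠ 0 :=
    fun len t h => (hx.trans_le (le_winMarg h hnn x)).ne'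
  congr 1
  rw [hstat.rollout_eq, ← winMarg_full (by omega) ρ x]
  exact Real.logb_div_mul_prod_div_eq_sum 2 (fun k => winMarg (m + 1 + k) 0 (by omega) ρ x)
    _ _ (fun _ => hpos _ _ _) (fun _ => hpos _ _ _) (fun _ => hpos _ _ _)

/-- Let `ρ` be a distribution on `Σ^r` (`r = m+1+L > n = m+1`) that
is shift-stationary at order `≤ n` and has full support of its length-`(n−1)`
marginals, and let `ρ̃` be its project–lift rollout.  Then the KL divergence admits
the exact chain-rule decomposition
`KL(ρ ‖ ρ̃) = Σ_{t=n+1}^{r} I_ρ(X_t ; X_1^{t−n} ∣ X_{t−n+1}^{t−1})`,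
the sum of the conditional mutual informations (in bits) between the token at
position `t` and the tokens more than `n−1` steps in its past, given the intervening
`n−1` tokens. -/
theorem kl_eq_sum_condMutualInfo [Fintype σ] [DecidableEq σ]
    (m L : ℕ) (hL : 0 < L) (hs : 2 ≤ Fintype.card σ)
    (ρ : (Fin (m + 1 + L) → σ) → ℝ) (hρ : IsDistOn ρ)
    (hstat : ShiftStationary m L ρ)
    (hfull : ∀ c : Fin m → σ, 0 < ctxMarg m L ρ c) :
    klBits ρ (rollout m L ρ) = ∑ t : Fin L, condMutualInfo m L ρ t :=
  kl_eq_sum_condMutualInfo_general m L ρ hρ hstat
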